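/- Let G be a connected graph with n ≥ 2 vertices and m edges. For any two distinct new vertices i, j ∈ V′, the resistance distance in the triangulation and that in the subdivision are related by Ω^T_{ij} = (1/3)·Ω^S_{ij} + 2/3. -/

import Mathlib

open BigOperators Matrix

namespace KirchhoffPaper

/-- `B` is a Moore–Penrose (pseudo)inverse of `A`. -/
def IsMoorePenrose {n : Type*} [Fintype n] [DecidableEq n] (A B : Matrix n n ℝ) : Prop :=
  A * B * A = A ∧ B * A * B = B ∧ (A * B)ᵀ = A * B ∧ (B * A)ᵀ = B * A

variable {V : Type*}

/-- The resistance distance between `i` and `j` in `G`: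
`Ω_{ij} = L⁺_{ii} + L⁺_{jj} - 2 L⁺_{ij}` with `L⁺` the Moore–Penrose inverse of the Laplacian. -/
noncomputable def resistanceDistance [Fintype V] [DecidableEq V]
    (G : SimpleGraph V) [DecidableRel G.Adj] (i j : V) : ℝ :=
  letI := Classical.propDecidable
  if h : ∃ B, IsMoorePenrose (G.lapMatrix ℝ) B then
    h.choose i i + h.choose j j - 2 * h.choose i j
  else 0

/-- Kirchhoff index `R(G) = Σ_{{i,j}⊆V} Ω_{ij}` (as half the sum over ordered pairs;
note `Ω_{ii} = 0`). -/
noncomputable def kirchhoffIndex [Fintype V] [DecidableEq V]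
    (G : SimpleGraph V) [DecidableRel G.Adj] : ℝ :=
  (1 / 2) * ∑ i, ∑ j, resistanceDistance G i j

/-- Additive degree-Kirchhoff index `R⁺(G) = Σ_{{i,j}⊆V} (d_i + d_j) Ω_{ij}`. -/
noncomputable def addDegKirchhoffIndex [Fintype V] [DecidableEq V]
    (G : SimpleGraph V) [DecidableRel G.Adj] : ℝ :=
  (1 / 2) * ∑ i, ∑ j, ((G.degree i : ℝ) + (G.degree j : ℝ)) * resistanceDistance G i j

/-- Multiplicative degree-Kirchhoff index `R*(G) = Σ_{{i,j}⊆V} d_i d_j Ω_{ij}`. -/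
noncomputable def mulDegKirchhoffIndex [Fintype V] [DecidableEq V]
    (G : SimpleGraph V) [DecidableRel G.Adj] : ℝ :=
  (1 / 2) * ∑ i, ∑ j, ((G.degree i : ℝ) * (G.degree j : ℝ)) * resistanceDistance G i j

/-- The subdivision `S(G)`: each edge of `G` is replaced by a path of length two through a
new vertex (one new vertex per edge of `G`). -/
def subdivision [DecidableEq V] (G : SimpleGraph V) : SimpleGraph (V ⊕ G.edgeSet) where
  Adj x y :=
    match x, y with
    | Sum.inl u, Sum.inr e => u ∈ (e : Sym2 V)
    | Sum.inr e, Sum.inl u => u ∈ (e : Sym2 V)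
    | _, _ => False
  symm := by constructor; rintro (u | e) (v | f) h <;> exact h
  loopless := by constructor; rintro (u | e) h <;> exact h

/-- The triangulation `T(G)`: each edge `uv` of `G` is turned into a triangle `uwv`
with `w` a new vertex associated with `uv`. -/
def triangulation [DecidableEq V] (G : SimpleGraph V) : SimpleGraph (V ⊕ G.edgeSet) where
  Adj x y :=
    match x, y with
    | Sum.inl u, Sum.inl v => G.Adj u v
    | Sum.inl u, Sum.inr e => u ∈ (e : Sym2 V)
    | Sum.inr e, Sum.inl u => u ∈ (e : Sym2 V)
    | _, _ => False
  symm := by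
    constructor
    rintro (u | e) (v | f) h
    · exact G.adj_symm h
    · exact h
    · exact h
    · exact h
  loopless := by
    constructor
    rintro (u | e) h
    · exact G.loopless.irrefl u h
    · exact h

instance [Fintype V] [DecidableEq V] (G : SimpleGraph V) [DecidableRel G.Adj] :
    DecidableRel (subdivision G).Adj := fun x y =>
  match x, y with
  | Sum.inl _, Sum.inl _ => inferInstanceAs (Decidable False)
  | Sum.inl u, Sum.inr e => inferInstanceAs (Decidable (u ∈ (e : Sym2 V)))
  | Sum.inr e, Sum.inl u => inferInstanceAs (Decidable (u ∈ (e : Sym2 V)))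
  | Sum.inr _, Sum.inr _ => inferInstanceAs (Decidable False)

instance [Fintype V] [DecidableEq V] (G : SimpleGraph V) [DecidableRel G.Adj] :
    DecidableRel (triangulation G).Adj := fun x y =>
  match x, y with
  | Sum.inl u, Sum.inl v => inferInstanceAs (Decidable (G.Adj u v))
  | Sum.inl u, Sum.inr e => inferInstanceAs (Decidable (u ∈ (e : Sym2 V)))
  | Sum.inr e, Sum.inl u => inferInstanceAs (Decidable (u ∈ (e : Sym2 V)))
  | Sum.inr _, Sum.inr _ => inferInstanceAs (Decidable False)

/-- A bundled finite simple graph (with decidable adjacency), used for iterating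
the subdivision and triangulation constructions. -/
structure FGraph where
  V : Type*
  [fV : Fintype V]
  [dV : DecidableEq V]
  G : SimpleGraph V
  [dG : DecidableRel G.Adj]

attribute [instance] FGraph.fV FGraph.dV FGraph.dG

/-- Subdivision, as an operation on bundled graphs. -/
def FGraph.subdiv (H : FGraph) : FGraph := { V := H.V ⊕ H.G.edgeSet, G := subdivision H.G }

/-- Triangulation, as an operation on bundled graphs. -/
def FGraph.triang (H : FGraph) : FGraph := { V := H.V ⊕ H.G.edgeSet, G := triangulation H.G }

/-- Kirchhoff index of a bundled graph. -/
noncomputable def FGraph.R (H : FGraph) : ℝ := kirchhoffIndex H.G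

/-- Additive degree-Kirchhoff index of a bundled graph. -/
noncomputable def FGraph.Rplus (H : FGraph) : ℝ := addDegKirchhoffIndex H.G

/-- Multiplicative degree-Kirchhoff index of a bundled graph. -/
noncomputable def FGraph.Rstar (H : FGraph) : ℝ := mulDegKirchhoffIndex H.G

/-!
A Moore–Penrose inverse `X` of the symmetric Laplacian exists (functional calculus of
`x ↦ x⁻¹`), and `L X L = L` turns `Ω_ij = dᵀ X d`, `d = e_i - e_j`, into `x_i - x_j` for any
potential `x` with `L x = d`. With `B` the vertex–edge incidence matrix of `G`,
`L_S = [D, -B; -Bᵀ, 2]`, `L_T = L_S + [L_G, 0; 0, 0]` and `B Bᵀ = D + A`. For a current `δ`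
entering at the new vertices, solve `L_G z = B δ` on the connected graph `G`: then
`(z, (Bᵀz + δ)/2)` is a potential for `δ` in `S(G)` and `(z/3, (Bᵀz + 3δ)/6)` one in `T(G)`.
For `δ = e_i - e_j` and `w = (Bᵀz)_i - (Bᵀz)_j` the two potential differences are
`(w + 2)/2` and `(w + 6)/6`.
-/

open SimpleGraph

section MoorePenrose

variable {ι : Type*} [Fintype ι] [DecidableEq ι] {A B C : Matrix ι ι ℝ}

theorem IsMoorePenrose.transpose (h : IsMoorePenrose A B) : IsMoorePenrose Aᵀ Bᵀ := by
  obtain ⟨h₁, h₂, h₃, h₄⟩ := h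
  refine ⟨?_, ?_, ?_, ?_⟩
  · rw [← transpose_mul, ← transpose_mul, ← Matrix.mul_assoc, h₁]
  · rw [← transpose_mul, ← transpose_mul, ← Matrix.mul_assoc, h₂]
  · rw [← transpose_mul, transpose_transpose, h₄]
  · rw [← transpose_mul, transpose_transpose, h₃]

theorem IsMoorePenrose.unique (h₁ : IsMoorePenrose A B) (h₂ : IsMoorePenrose A C) : B = C := by
  obtain ⟨a1, b1, c1, d1⟩ := h₁
  obtain ⟨a2, b2, c2, d2⟩ := h₂
  have hAB : A * B = A * C := by
    calc A * B = (A * B)ᵀ := c1.symm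
    _ = ((A * C) * (A * B))ᵀ := by rw [← Matrix.mul_assoc, a2]
    _ = (A * B) * (A * C) := by rw [transpose_mul, c1, c2]
    _ = A * C := by rw [← Matrix.mul_assoc, a1]
  have hBA : B * A = C * A := by
    calc B * A = (B * A)ᵀ := d1.symm
    _ = ((B * A) * (C * A))ᵀ := by rw [Matrix.mul_assoc, ← Matrix.mul_assoc A, a2]
    _ = (C * A) * (B * A) := by rw [transpose_mul, d1, d2]
    _ = C * A := by rw [Matrix.mul_assoc, ← Matrix.mul_assoc A, a1]
  calc B = B * A * B := b1.symm
  _ = C * A * C := by rw [Matrix.mul_assoc, hAB, ← Matrix.mul_assoc, hBA]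
  _ = C := b2

theorem IsMoorePenrose.transpose_eq_self (hA : A.IsSymm) (h : IsMoorePenrose A B) : Bᵀ = B :=
  (hA.eq ▸ h.transpose).unique h

theorem exists_isMoorePenrose_of_isSymm (hA : A.IsSymm) : ∃ B, IsMoorePenrose A B := by
  have hc (f : ℝ → ℝ) : ContinuousOn f (spectrum ℝ A) := A.finite_spectrum.continuousOn f
  have hmul (f g : ℝ → ℝ) : cfc (fun x => f x * g x) A = cfc f A * cfc g A :=
    cfc_mul f g A (hc f) (hc g)
  have hid : cfc (fun x => x) A = A := cfc_id' ℝ A (isHermitian_iff_isSymm.2 hA)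
  have hT (f : ℝ → ℝ) : (cfc f A)ᵀ = cfc f A :=
    (isHermitian_iff_isSymm.1 (IsSelfAdjoint.cfc (f := f) (a := A))).eq
  have hinv (x : ℝ) : x * x⁻¹ * x = x := by
    rcases eq_or_ne x 0 with rfl | hx
    · simp
    · field_simp
  -- the junk value `0⁻¹ = 0` makes `x ↦ x⁻¹` the pseudo-inverse on each eigenvalue
  refine ⟨cfc (·⁻¹ : ℝ → ℝ) A, ?_, ?_, ?_, ?_⟩
  · have h : cfc (fun x : ℝ => x * x⁻¹ * x) A = cfc (fun x => x) A :=
      cfc_congr fun x _ => hinv x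
    rwa [hmul, hmul, hid] at h
  · have h : cfc (fun x : ℝ => x⁻¹ * x * x⁻¹) A = cfc (·⁻¹ : ℝ → ℝ) A :=
      cfc_congr fun x _ => by simpa using hinv x⁻¹
    rwa [hmul, hmul, hid] at h
  · have h := hT fun x => x * x⁻¹
    rwa [hmul, hid] at h
  · have h := hT fun x => x⁻¹ * x
    rwa [hmul, hid] at h

end MoorePenrose

section Laplacian

variable {W : Type*} [Fintype W] [DecidableEq W] (H : SimpleGraph W) [DecidableRel H.Adj]

theorem lapMatrix_eq_diagonal_sub {R : Type*} [Ring R] :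
    H.lapMatrix R = diagonal (H.adjMatrix R *ᵥ 1) - H.adjMatrix R := by
  rw [lapMatrix, degMatrix]
  congr 2
  ext v
  simp

theorem sum_lapMatrix_mulVec {R : Type*} [CommRing R] (x : W → R) :
    ∑ i, (H.lapMatrix R *ᵥ x) i = 0 := by
  rw [← one_dotProduct, dotProduct_mulVec, ← mulVec_transpose, (H.isSymm_lapMatrix R).eq,
    show (1 : W → R) = fun _ => 1 from rfl, lapMatrix_mulVec_const_eq_zero, zero_dotProduct]

theorem exists_lapMatrix_mulVec_eq (hH : H.Connected) {d : W → ℝ} (hd : ∑ i, d i = 0) :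
    ∃ x, H.lapMatrix ℝ *ᵥ x = d := by
  have hL := H.isSymm_lapMatrix ℝ
  obtain ⟨X, hX⟩ := exists_isMoorePenrose_of_isSymm hL
  have hLX : H.lapMatrix ℝ * X = X * H.lapMatrix ℝ := by
    rw [← hX.2.2.1, transpose_mul, hX.transpose_eq_self hL, hL.eq]
  refine ⟨X *ᵥ d, ?_⟩
  -- the defect `r` lies in the kernel of `L`, so it is constant, and it has zero sum
  set r := d - H.lapMatrix ℝ *ᵥ X *ᵥ d
  have hr : H.lapMatrix ℝ *ᵥ r = 0 := by
    rw [mulVec_sub, mulVec_mulVec, mulVec_mulVec, Matrix.mul_assoc, hLX, ← Matrix.mul_assoc,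
      hX.1, sub_self]
  have hconst := (H.lapMatrix_mulVec_eq_zero_iff_forall_reachable).1 hr
  have hsum : ∑ i, r i = 0 := by
    simp only [r, Pi.sub_apply, Finset.sum_sub_distrib, hd, sum_lapMatrix_mulVec, sub_zero]
  suffices r = 0 from (sub_eq_zero.1 this).symm
  ext k
  have : Nonempty W := hH.nonempty
  have hk : ∑ i, r i = Fintype.card W * r k := by
    simp [Finset.sum_congr rfl fun i _ => hconst i k (hH.preconnected i k)]
  exact (mul_eq_zero.1 (hk ▸ hsum)).resolve_left (by positivity)

theorem resistanceDistance_eq_of_isMoorePenrose {X : Matrix W W ℝ}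
    (hX : IsMoorePenrose (H.lapMatrix ℝ) X) (i j : W) :
    resistanceDistance H i j = X i i + X j j - 2 * X i j := by
  have h : ∃ B, IsMoorePenrose (H.lapMatrix ℝ) B := ⟨X, hX⟩
  -- `resistanceDistance` is stated with classical decidability instances
  unfold resistanceDistance
  rw [Subsingleton.elim (fun a b => Classical.propDecidable (a = b)) ‹DecidableEq W›,
    Subsingleton.elim (fun a b => Classical.propDecidable (H.Adj a b)) ‹DecidableRel H.Adj›,
    dif_pos h, h.choose_spec.unique hX]

theorem resistanceDistance_eq_sub_of_lapMatrix_mulVec {x : W → ℝ} {i j : W}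
    (hx : H.lapMatrix ℝ *ᵥ x = Pi.single i 1 - Pi.single j 1) :
    resistanceDistance H i j = x i - x j := by
  have hL := H.isSymm_lapMatrix ℝ
  obtain ⟨X, hX⟩ := exists_isMoorePenrose_of_isSymm hL
  have hXT := hX.transpose_eq_self hL
  calc resistanceDistance H i j
      = (Pi.single i 1 - Pi.single j 1) ⬝ᵥ X *ᵥ (Pi.single i 1 - Pi.single j 1) := by
        have hji : X j i = X i j := congrFun (congrFun hXT i) j
        rw [resistanceDistance_eq_of_isMoorePenrose H hX]
        simp only [mulVec_sub, mulVec_single_one, dotProduct_sub, sub_dotProduct,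
          single_one_dotProduct, col_apply, hji]
        ring
    _ = x ⬝ᵥ (H.lapMatrix ℝ * X * H.lapMatrix ℝ) *ᵥ x := by
        rw [← hx, ← mulVec_mulVec, ← mulVec_mulVec, dotProduct_mulVec x, ← mulVec_transpose,
          hL.eq]
    _ = x i - x j := by
        rw [hX.1, hx]
        simp

end Laplacian

theorem sum_subtype_eq_sum_of_notMem {α M : Type*} [Fintype α] [AddCommMonoid M] {s : Set α}
    [Fintype s] {f : α → M} (hf : ∀ a ∉ s, f a = 0) : ∑ a : s, f a = ∑ a, f a := by
  rw [← Finset.sum_subtype s.toFinset (fun _ => Set.mem_toFinset) f]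
  exact Finset.sum_subset (Finset.subset_univ _) fun a _ ha => hf a (by simpa using ha)

section Adj

variable [DecidableEq V] {G : SimpleGraph V}

@[simp] theorem subdivision_adj_inl_inl {u v : V} : ¬(subdivision G).Adj (.inl u) (.inl v) := id
@[simp] theorem subdivision_adj_inl_inr {u : V} {e : G.edgeSet} :
    (subdivision G).Adj (.inl u) (.inr e) ↔ u ∈ (e : Sym2 V) := Iff.rfl
@[simp] theorem subdivision_adj_inr_inl {e : G.edgeSet} {u : V} :
    (subdivision G).Adj (.inr e) (.inl u) ↔ u ∈ (e : Sym2 V) := Iff.rfl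
@[simp] theorem subdivision_adj_inr_inr {e f : G.edgeSet} :
    ¬(subdivision G).Adj (.inr e) (.inr f) := id
@[simp] theorem triangulation_adj_inl_inl {u v : V} :
    (triangulation G).Adj (.inl u) (.inl v) ↔ G.Adj u v := Iff.rfl
@[simp] theorem triangulation_adj_inl_inr {u : V} {e : G.edgeSet} :
    (triangulation G).Adj (.inl u) (.inr e) ↔ u ∈ (e : Sym2 V) := Iff.rfl
@[simp] theorem triangulation_adj_inr_inl {e : G.edgeSet} {u : V} :
    (triangulation G).Adj (.inr e) (.inl u) ↔ u ∈ (e : Sym2 V) := Iff.rfl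
@[simp] theorem triangulation_adj_inr_inr {e f : G.edgeSet} :
    ¬(triangulation G).Adj (.inr e) (.inr f) := id

end Adj

section Incidence

variable (R : Type*) [CommRing R] [DecidableEq V] (G : SimpleGraph V) [DecidableRel G.Adj]

def edgeIncMatrix : Matrix V G.edgeSet R := (G.incMatrix R).submatrix id (↑)

theorem edgeIncMatrix_apply (u : V) (e : G.edgeSet) :
    edgeIncMatrix R G u e = if u ∈ (e : Sym2 V) then 1 else 0 := by
  simp [edgeIncMatrix, incMatrix_apply', incidenceSet, e.2]

variable [Fintype V]

theorem sum_edgeIncMatrix_apply (u : V) : ∑ e, edgeIncMatrix R G u e = G.degree u := by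
  rw [edgeIncMatrix, ← sum_incMatrix_apply]
  exact sum_subtype_eq_sum_of_notMem (f := G.incMatrix R u) fun e he =>
    incMatrix_of_notMem_incidenceSet G fun h => he h.1

theorem sum_edgeIncMatrix_apply_eq_two (e : G.edgeSet) : ∑ u, edgeIncMatrix R G u e = 2 :=
  sum_incMatrix_apply_of_mem_edgeSet G e.2

theorem sum_edgeIncMatrix_mulVec (δ : G.edgeSet → R) :
    ∑ u, (edgeIncMatrix R G *ᵥ δ) u = 2 * ∑ e, δ e := by
  simp only [mulVec, dotProduct]
  rw [Finset.sum_comm, Finset.mul_sum]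
  simp [← Finset.sum_mul, sum_edgeIncMatrix_apply_eq_two]

theorem edgeIncMatrix_mul_transpose :
    edgeIncMatrix R G * (edgeIncMatrix R G)ᵀ = G.degMatrix R + G.adjMatrix R := by
  have h : edgeIncMatrix R G * (edgeIncMatrix R G)ᵀ = G.incMatrix R * (G.incMatrix R)ᵀ := by
    ext u w
    rw [mul_apply, mul_apply]
    refine sum_subtype_eq_sum_of_notMem (f := fun e => G.incMatrix R u e * G.incMatrix R w e)
      fun e he => ?_
    simp [incMatrix_of_notMem_incidenceSet G fun h : e ∈ G.incidenceSet u => he h.1]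
  rw [h, incMatrix_mul_transpose]
  ext u w
  rcases eq_or_ne u w with rfl | huw
  · simp [degMatrix]
  · simp [degMatrix, huw]

theorem adjMatrix_subdivision :
    (subdivision G).adjMatrix R = fromBlocks 0 (edgeIncMatrix R G) (edgeIncMatrix R G)ᵀ 0 := by
  ext (u | e) (v | f) <;> simp [adjMatrix_apply, edgeIncMatrix_apply]

theorem adjMatrix_triangulation :
    (triangulation G).adjMatrix R =
      fromBlocks (G.adjMatrix R) (edgeIncMatrix R G) (edgeIncMatrix R G)ᵀ 0 := by
  ext (u | e) (v | f) <;> simp [adjMatrix_apply, edgeIncMatrix_apply]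

theorem lapMatrix_subdivision :
    (subdivision G).lapMatrix R =
      fromBlocks (G.degMatrix R) (-edgeIncMatrix R G) (-(edgeIncMatrix R G)ᵀ) 2 := by
  rw [lapMatrix_eq_diagonal_sub, adjMatrix_subdivision]
  ext (u | e) (v | f) <;>
    simp [fromBlocks_mulVec, diagonal_apply, degMatrix, mulVec, dotProduct,
      sum_edgeIncMatrix_apply, sum_edgeIncMatrix_apply_eq_two, ofNat_apply]

theorem lapMatrix_triangulation :
    (triangulation G).lapMatrix R =
      (subdivision G).lapMatrix R + fromBlocks (G.lapMatrix R) 0 0 0 := by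
  rw [lapMatrix_eq_diagonal_sub, lapMatrix_eq_diagonal_sub, lapMatrix_eq_diagonal_sub,
    adjMatrix_subdivision, adjMatrix_triangulation]
  ext (u | e) (v | f)
  · by_cases huv : u = v <;> simp [fromBlocks_mulVec, huv, add_comm]
  all_goals simp [fromBlocks_mulVec, diagonal_apply]

theorem edgeIncMatrix_mulVec_transpose_mulVec (z : V → R) :
    edgeIncMatrix R G *ᵥ ((edgeIncMatrix R G)ᵀ *ᵥ z) =
      G.degMatrix R *ᵥ z + G.adjMatrix R *ᵥ z := by
  rw [mulVec_mulVec, edgeIncMatrix_mul_transpose, add_mulVec]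

end Incidence

section Potentials

variable [Fintype V] [DecidableEq V] {G : SimpleGraph V} [DecidableRel G.Adj]
  {z : V → ℝ} {δ : G.edgeSet → ℝ}

theorem lapMatrix_subdivision_mulVec_potential
    (hz : G.lapMatrix ℝ *ᵥ z = edgeIncMatrix ℝ G *ᵥ δ) :
    (subdivision G).lapMatrix ℝ *ᵥ Sum.elim z ((2 : ℝ)⁻¹ • ((edgeIncMatrix ℝ G)ᵀ *ᵥ z + δ)) =
      Sum.elim (0 : V → ℝ) δ := by
  rw [lapMatrix_subdivision, fromBlocks_mulVec, Sum.elim_comp_inl, Sum.elim_comp_inr]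
  congr 1
  · rw [neg_mulVec, mulVec_smul, mulVec_add, edgeIncMatrix_mulVec_transpose_mulVec, ← hz,
      lapMatrix, sub_mulVec]
    module
  · rw [ofNat_mulVec, neg_mulVec]
    module

theorem lapMatrix_triangulation_mulVec_potential
    (hz : G.lapMatrix ℝ *ᵥ z = edgeIncMatrix ℝ G *ᵥ δ) :
    (triangulation G).lapMatrix ℝ *ᵥ
        Sum.elim ((3 : ℝ)⁻¹ • z) ((6 : ℝ)⁻¹ • ((edgeIncMatrix ℝ G)ᵀ *ᵥ z + (3 : ℝ) • δ)) =
      Sum.elim (0 : V → ℝ) δ := by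
  rw [lapMatrix_triangulation, lapMatrix_subdivision, fromBlocks_add, fromBlocks_mulVec,
    Sum.elim_comp_inl, Sum.elim_comp_inr]
  congr 1
  · simp only [add_zero, add_mulVec, neg_mulVec, mulVec_smul, mulVec_add,
      edgeIncMatrix_mulVec_transpose_mulVec, ← hz]
    rw [lapMatrix, sub_mulVec]
    module
  · simp only [add_zero, ofNat_mulVec, neg_mulVec, mulVec_smul]
    module

end Potentials

theorem statement_14_general {V : Type*} [Fintype V] [DecidableEq V]
    (G : SimpleGraph V) [DecidableRel G.Adj]
    (hconn : G.Connected) :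
    ∀ i j : G.edgeSet, i ≠ j →
      resistanceDistance (triangulation G) (Sum.inr i) (Sum.inr j) =
        (1 / 3) * resistanceDistance (subdivision G) (Sum.inr i) (Sum.inr j) + 2 / 3 := by
  intro i j hij
  set δ : G.edgeSet → ℝ := Pi.single i 1 - Pi.single j 1
  obtain ⟨z, hz⟩ := exists_lapMatrix_mulVec_eq G hconn (d := edgeIncMatrix ℝ G *ᵥ δ)
    (by simp [sum_edgeIncMatrix_mulVec, δ, Finset.sum_sub_distrib])
  have hδ : Sum.elim (0 : V → ℝ) δ =
      Pi.single (Sum.inr i) 1 - Pi.single (Sum.inr j) 1 := by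
    ext (u | e) <;> simp [δ, Pi.single_apply]
  rw [resistanceDistance_eq_sub_of_lapMatrix_mulVec _
      ((lapMatrix_triangulation_mulVec_potential hz).trans hδ),
    resistanceDistance_eq_sub_of_lapMatrix_mulVec _
      ((lapMatrix_subdivision_mulVec_potential hz).trans hδ)]
  simp only [Sum.elim_inr, Pi.add_apply, Pi.smul_apply, smul_eq_mul, δ, Pi.sub_apply,
    Pi.single_eq_same, Pi.single_eq_of_ne hij, Pi.single_eq_of_ne hij.symm]
  ring

theorem statement_14 {V : Type*} [Fintype V] [DecidableEq V]
    (G : SimpleGraph V) [DecidableRel G.Adj] (n m : ℕ)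
    (hn : Fintype.card V = n) (hm : G.edgeFinset.card = m)
    (hconn : G.Connected) (hn2 : 2 ≤ n) :
    ∀ i j : G.edgeSet, i ≠ j →
      resistanceDistance (triangulation G) (Sum.inr i) (Sum.inr j) =
        (1 / 3) * resistanceDistance (subdivision G) (Sum.inr i) (Sum.inr j) + 2 / 3 :=
  statement_14_general G hconn

end KirchhoffPaper
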